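/- Let u: ℝ → ℝ be a strictly convex smooth function and a > 0 a real number such that u(t + a) = e^{−a} u(t) for all t ∈ ℝ. Then u(t) > 0 for all t ∈ ℝ. -/

import Mathlib

/-!
Strict convexity at the midpoint `t + a` of `t` and `t + 2a` gives
`q u(t) < (u(t) + q² u(t)) / 2` with `q = e^{-a}`, i.e. `(1 - q)² u(t) > 0`.
-/

open Set

theorem StrictConvexOn.pos_of_map_add_eq_mul {f : ℝ → ℝ} (hf : StrictConvexOn ℝ univ f)
    {a q : ℝ} (ha : a ≠ 0) (hq : ∀ x, f (x + a) = q * f x) (t : ℝ) : 0 < f t := by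
  have hne : t ≠ t + 2 * a := by intro h; apply ha; linarith
  have hmid := hf.2 (mem_univ t) (mem_univ (t + 2 * a)) hne (by norm_num : (0 : ℝ) < 1 / 2)
    (by norm_num : (0 : ℝ) < 1 / 2) (by norm_num)
  have htwice : f (t + 2 * a) = q * (q * f t) := by
    rw [show t + 2 * a = t + a + a by ring, hq, hq]
  rw [show (1 / 2 : ℝ) • t + (1 / 2 : ℝ) • (t + 2 * a) = t + a by
    simp only [smul_eq_mul]; ring, hq, htwice, smul_eq_mul, smul_eq_mul] at hmid
  have hsq : 0 < (1 - q) ^ 2 * f t := by linear_combination 2 * hmid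
  exact pos_of_mul_pos_right hsq (sq_nonneg _)

/-- A strictly convex smooth (C²) function `u : ℝ → ℝ` with `u'' > 0` everywhere which
satisfies the equivariance relation `u(t + a) = e^{-a} u(t)` for some `a > 0` is
everywhere strictly positive. -/
theorem strictly_convex_equivariant_positive
    (u : ℝ → ℝ) (a : ℝ) (ha : 0 < a)
    (hu : ContDiff ℝ 2 u)
    (hconv : ∀ t : ℝ, 0 < deriv (deriv u) t)
    (heq : ∀ t : ℝ, u (t + a) = Real.exp (-a) * u t) :
    ∀ t : ℝ, 0 < u t :=
  (strictConvexOn_univ_of_deriv2_pos hu.continuous hconv).pos_of_map_add_eq_mul ha.ne' heq
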